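/- The 'image-configuration' of the map ψ_D is recurrent: for t ∈ T, the configuration η = ψ_D(t) satisfies that for every finite nonempty F ⊆ V there exists x ∈ F with η(x) ≥ deg_F(x), where deg_F(x) is the number of neighbours of x in F. -/
import Mathlib


open Finset
open scoped Classical

namespace Anchored

variable {V : Type*} [DecidableEq V]

/-- iterating a partial parent map; `none` represents the sink. -/
def iterP (p : V → Option V) : ℕ → V → Option V
  | 0, v => some v
  | n + 1, v => (p v).bind (iterP p n)

/-- walks in the multigraph `a` avoiding the set `A` -/
def ReachAvoid (a : V → V → ℕ) (A : Finset V) (u v : V) : Prop :=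
  ∃ (nn : ℕ) (f : ℕ → V), f 0 = u ∧ f nn = v ∧ (∀ j ≤ nn, f j ∉ A) ∧
    ∀ j < nn, 0 < a (f j) (f (j + 1))

/-- oriented edges (with multiplicity index) from `v` into the finite set `T` -/
def edgesTo (a : V → V → ℕ) (v : V) (T : Finset V) : Finset (V × ℕ) :=
  T.biUnion fun w => (Finset.range (a v w)).image fun i => (w, i)

variable (a : V → V → ℕ) (S : Finset V) (out : V → Finset V)

/-- number of edges from `v` to the sink of the wired graph on `S`;
`out v` is the set of heads of sink edges at `v` (actual vertices of `G`). -/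
def sk (v : V) : ℕ := ∑ w ∈ out v, a v w

/-- degree of `v` in the wired graph on `S` -/
def degS (v : V) : ℕ := sk a out v + ∑ w ∈ S, a v w

variable (η : V → ℕ) (D : ℕ → Finset V) (kk : ℕ)

/-- number of global steps allotted to each phase of the anchored burning -/
def plen : ℕ := S.card + 1

/-- Flattened anchored burning process: `U m` is the set of unburnt vertices
after `m` global steps; phase `i` (for `i = 1, …, kk + 1`) occupies the steps
`m ∈ [(i-1)·plen, i·plen)` and forbids burning the vertices of `D (kk - i + 1)`.
A vertex burns when its height is at least its number of edges to unburnt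
vertices (the sink being burnt at time `0`). -/
def U : ℕ → Finset V
  | 0 => S
  | m + 1 => (U m).filter fun v =>
      v ∈ D (kk - m / plen S) ∨ η v < ∑ w ∈ U m, a v w

/-- the (anchored) burning time of `v` -/
noncomputable def τ (v : V) : ℕ := sInf {m | v ∉ U a S η D kk m}

/-- number of oriented edges from `v` whose head was burnt strictly before `v`
(including the sink edges) -/
noncomputable def mv (v : V) : ℕ :=
  sk a out v + ∑ w ∈ S \ U a S η D kk (τ a S η D kk v - 1), a v w

/-- the set of candidate tree edges at `v`: the oriented edges from `v` to the
layer burnt at the previous step (at the first step of a phase: to everything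
burnt in earlier phases, including the sink) -/
noncomputable def Fv (v : V) : Finset (V × ℕ) :=
  if (τ a S η D kk v - 1) % plen S = 0 then
    edgesTo a v (out v) ∪ edgesTo a v (S \ U a S η D kk (τ a S η D kk v - 1))
  else
    edgesTo a v
      (U a S η D kk (τ a S η D kk v - 2) \ U a S η D kk (τ a S η D kk v - 1))

/-- `Spec … prec e` says that `e` encodes the spanning tree assigned to `η` by
the anchored burning bijection: each `v ∈ S` gets the edge of `F_v` having
exactly `ℓ` predecessors in the ordering `prec v`, where
`η v = deg v - m_v + ℓ`. -/
def Spec (prec : V → (V × ℕ) → (V × ℕ) → Prop) (e : V → Option (V × ℕ)) : Prop :=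
  (∀ v ∉ S, e v = none) ∧
  ∀ v ∈ S, ∃ ed : V × ℕ, e v = some ed ∧ ed ∈ Fv a S out η D kk v ∧
    η v + mv a S out η D kk v =
      degS a S out v + ((Fv a S out η D kk v).filter fun f => prec v f ed).card

/-- the parent map (toward the sink) of an encoded spanning tree -/
def par (e : V → Option (V × ℕ)) (v : V) : Option V :=
  (e v).bind fun p => if p.1 ∈ S then some p.1 else none

/-- spanning trees of the wired graph on `S`, oriented toward the sink:
every vertex of `S` carries exactly one valid oriented edge, and following
these edges one reaches the sink. -/
def IsSpanningTree (e : V → Option (V × ℕ)) : Prop :=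
  (∀ v ∉ S, e v = none) ∧
  (∀ v ∈ S, ∃ w i, e v = some (w, i) ∧ i < a v w ∧ (w ∈ S ∨ w ∈ out v)) ∧
  (∀ v ∈ S, ∃ m, iterP (par S e) m v = none)

/-- stable configurations on the wired graph on `S` -/
def Stable : Prop := ∀ v ∈ S, η v < degS a S out v

/-- ample for every nonempty subset of `S` -/
def Ample : Prop := ∀ F ⊆ S, F.Nonempty → ∃ x ∈ F, ∑ y ∈ F, a x y ≤ η x

/-- recurrent configurations on the wired graph on `S` -/
def Recurrent : Prop := Stable a S out η ∧ Ample a S η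

end Anchored

namespace Anchored

variable {V : Type*} [DecidableEq V]

/-- the unique infinite path in the forest from `v`, followed `n` steps -/
def iterF (t : V → V × ℕ) (n : ℕ) (v : V) : V := (fun x => (t x).1)^[n] v

/-- spanning forests of `G` all of whose components are infinite one-ended
trees, encoded by the parent map toward the unique end: every vertex has one
valid oriented edge, no cycles, and every vertex has finitely many
descendants (one-endedness). -/
def IsForest (a : V → V → ℕ) (t : V → V × ℕ) : Prop :=
  (∀ v, (t v).2 < a v (t v).1) ∧
  (∀ v n, 0 < n → iterF t n v ≠ v) ∧
  (∀ v, {w | ∃ n, iterF t n w = v}.Finite)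

/-- `Rel … t η` says `η = ψ_D t`: for every `k ≥ 1`, writing
`W = desc_t (D k)`, the restriction of `η` to `W` corresponds to the
restriction of `t` to the edges of `G*_{W,k}` under the finite anchored
burning bijection of `G*_{W,k}` (whose sink edges join `D k` to `V \ W`). -/
def Rel (a : V → V → ℕ) (nbrs : V → Finset V) (D : ℕ → Finset V)
    (prec : V → (V × ℕ) → (V × ℕ) → Prop) (t : V → V × ℕ) (η : V → ℕ) : Prop :=
  ∀ kk, 1 ≤ kk → ∀ W : Finset V,
    (∀ x, x ∈ W ↔ ∃ n, iterF t n x ∈ D kk) →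
    Spec a W (fun v => if v ∈ D kk then nbrs v \ W else ∅) η D kk prec
      (fun v => if v ∈ W then some (t v) else none)

end Anchored

/-- The image configuration of `ψ_D` is recurrent: for a
spanning forest `t ∈ T` with infinite one-ended components, the configuration
`η = ψ_D t` is ample for every finite nonempty `F ⊆ V`: there is `x ∈ F` with
`η x ≥ deg_F x`. -/
theorem stmt10 {V : Type*} [DecidableEq V] [Infinite V]
    (a : V → V → ℕ) (nbrs : V → Finset V)
    (hsymm : ∀ u v, a u v = a v u) (hloop : ∀ v, a v v = 0)
    (hnbrs : ∀ v w, w ∈ nbrs v ↔ 0 < a v w)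
    (hlf : ∀ v, {w | 0 < a v w}.Finite)
    (hconn : ∀ u v : V, Anchored.ReachAvoid a ∅ u v)
    (D : ℕ → Finset V) (hmono : Monotone D) (hD0 : D 0 = ∅)
    (hcover : ∀ v, ∃ j, v ∈ D j)
    (hsc : ∀ j, 1 ≤ j → ∀ v ∉ D j, {w | Anchored.ReachAvoid a (D j) v w}.Infinite)
    (prec : V → (V × ℕ) → (V × ℕ) → Prop)
    (hprec : ∀ v, IsStrictTotalOrder (V × ℕ) (prec v))
    (t : V → V × ℕ) (ht : Anchored.IsForest a t)
    (η : V → ℕ) (hrel : Anchored.Rel a nbrs D prec t η) :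
    ∀ F : Finset V, F.Nonempty → ∃ x ∈ F, ∑ y ∈ F, a x y ≤ η x := by
  intro F hF
  classical
  -- choose `kk ≥ 1` with `F ⊆ D kk`
  set kk : ℕ := 1 + F.sup fun y => (hcover y).choose with hkk
  have hkk1 : 1 ≤ kk := Nat.le_add_right 1 _
  have hFD : ∀ y ∈ F, y ∈ D kk := by
    intro y hy
    have h1 : y ∈ D (hcover y).choose := (hcover y).choose_spec
    exact hmono (le_trans (Finset.le_sup hy) (Nat.le_add_left _ 1)) h1
  -- the finite set `W` of descendants of `D kk`
  have hWfin : {x : V | ∃ n, Anchored.iterF t n x ∈ D kk}.Finite := by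
    have : {x : V | ∃ n, Anchored.iterF t n x ∈ D kk} =
        ⋃ v ∈ (D kk : Set V), {w | ∃ n, Anchored.iterF t n w = v} := by
      ext x
      simp only [Set.mem_setOf_eq, Set.mem_iUnion, exists_prop, Finset.mem_coe]
      constructor
      · rintro ⟨n, hn⟩; exact ⟨_, hn, n, rfl⟩
      · rintro ⟨v, hv, n, rfl⟩; exact ⟨n, hv⟩
    rw [this]
    exact Set.Finite.biUnion (D kk).finite_toSet fun v _ => ht.2.2 v
  set W : Finset V := hWfin.toFinset with hWdef
  have hWmem : ∀ x, x ∈ W ↔ ∃ n, Anchored.iterF t n x ∈ D kk := by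
    intro x; simp [hWdef, Set.Finite.mem_toFinset]
  have hDW : ∀ x ∈ D kk, x ∈ W := by
    intro x hx; exact (hWmem x).2 ⟨0, by simpa [Anchored.iterF] using hx⟩
  have hFW : ∀ y ∈ F, y ∈ W := fun y hy => hDW y (hFD y hy)
  -- the spec from `hrel`
  obtain ⟨-, hspec⟩ := hrel kk hkk1 W hWmem
  set out : V → Finset V := fun v => if v ∈ D kk then nbrs v \ W else ∅
  -- `U` is decreasing and contained in `W`
  have hUsub : ∀ m, Anchored.U a W η D kk m ⊆ W := by
    intro m
    induction m with
    | zero => exact Finset.Subset.refl _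
    | succ n ih => exact fun v hv => ih (Finset.mem_of_mem_filter v hv)
  -- every vertex of `W` eventually leaves `U`
  have leave : ∀ v ∈ W, ∃ m, v ∉ Anchored.U a W η D kk m := by
    intro v hv
    by_contra hcon
    push_neg at hcon
    have hτ : Anchored.τ a W η D kk v = 0 := by
      have : {m | v ∉ Anchored.U a W η D kk m} = ∅ := by
        ext m; simp [hcon m]
      simp [Anchored.τ, this]
    obtain ⟨ed, -, -, heq⟩ := hspec v hv
    have hmv : Anchored.mv a W out η D kk v = Anchored.sk a out v := by
      simp [Anchored.mv, hτ, Anchored.U]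
    have hη : ∑ w ∈ W, a v w ≤ η v := by
      have := heq
      rw [hmv, Anchored.degS] at this
      omega
    have hmem : v ∈ Anchored.U a W η D kk (kk * Anchored.plen W + 1) :=
      hcon _
    rw [Anchored.U, Finset.mem_filter] at hmem
    rcases hmem.2 with h | h
    · rw [Nat.mul_div_cancel _ (by simp [Anchored.plen] : 0 < Anchored.plen W),
        Nat.sub_self, hD0] at h
      exact absurd h (Finset.notMem_empty v)
    · exact absurd (lt_of_lt_of_le h
        (Finset.sum_le_sum_of_subset (hUsub _))) (not_lt.2 hη)
  -- pick the vertex of `F` that burns first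
  obtain ⟨x, hxF, hxmin⟩ :=
    F.exists_min_image (fun y => Anchored.τ a W η D kk y) hF
  refine ⟨x, hxF, ?_⟩
  have hne : {m | x ∉ Anchored.U a W η D kk m}.Nonempty := by
    obtain ⟨m, hm⟩ := leave x (hFW x hxF); exact ⟨m, hm⟩
  have hxout : x ∉ Anchored.U a W η D kk (Anchored.τ a W η D kk x) :=
    Nat.sInf_mem hne
  have hτpos : 0 < Anchored.τ a W η D kk x := by
    rcases Nat.eq_zero_or_pos (Anchored.τ a W η D kk x) with h | h
    · exfalso; apply hxout; rw [h]; exact hFW x hxF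
    · exact h
  obtain ⟨m, hm⟩ : ∃ m, Anchored.τ a W η D kk x = m + 1 :=
    ⟨_, (Nat.succ_pred_eq_of_pos hτpos).symm⟩
  have hmemU : ∀ y ∈ F, y ∈ Anchored.U a W η D kk m := by
    intro y hy
    by_contra hny
    have : Anchored.τ a W η D kk y ≤ m := Nat.sInf_le hny
    have := hxmin y hy
    omega
  have hxU : x ∉ Anchored.U a W η D kk (m + 1) := by rw [← hm]; exact hxout
  rw [Anchored.U, Finset.mem_filter, not_and_or, not_or] at hxU
  rcases hxU with h | h
  · exact absurd (hmemU x hxF) h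
  · have hsum : ∑ w ∈ Anchored.U a W η D kk m, a x w ≤ η x := not_lt.1 h.2
    calc ∑ y ∈ F, a x y = ∑ y ∈ F.erase x, a x y := by
          rw [← Finset.sum_erase_add F _ hxF, hloop x, add_zero]
      _ ≤ ∑ w ∈ Anchored.U a W η D kk m, a x w := by
          apply Finset.sum_le_sum_of_subset
          intro y hy
          exact hmemU y (Finset.mem_of_mem_erase hy)
      _ ≤ η x := hsum
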